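/- Let 𝒟 be an abstract domain. Define the relation S_Up on minterms by: (u,w) ∈ S_Up iff (i) for every x ∈ C and (k,≺) ∈ 𝒟_{x,0}, if u⟦x−0≺k⟧ = false then w⟦x−0≺k⟧ = false; (ii) for every y ∈ C and (k,≺) ∈ 𝒟_{0,y}, if u⟦0−y≺k⟧ = true then w⟦0−y≺k⟧ = true; and (iii) for all x,y ∈ C and (k,≺) ∈ 𝒟_{x,y}, w⟦x−y≺k⟧ = u⟦x−y≺k⟧. Then for every set A of minterms, α_𝒟(⟦A⟧↑) ⊆ {w : there exists u ∈ A with (u,w) ∈ S_Up}; that is, the abstraction of the time successors of ⟦A⟧ is contained in the image of A under S_Up. -/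

import Mathlib

/-- A bound `(k, ≺)`: an integer `k` together with a strictness flag
(`true` codes `≤`, `false` codes `<`), ordered lexicographically,
so that `(k, <) < (k, ≤) < (k+1, <)`. -/
abbrev Bnd : Type := Lex (ℤ × Bool)

/-- Addition of bounds: `(k,≺) + (k',≺')` is `(k+k', ≺'')` where `≺''` is `≤`
iff both `≺` and `≺'` are `≤`. -/
instance : Add Bnd :=
  ⟨fun a b => toLex ((ofLex a).1 + (ofLex b).1, (ofLex a).2 && (ofLex b).2)⟩

/-- The zero bound is `(0, ≤)`. -/
instance : Zero Bnd := ⟨toLex (0, true)⟩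

instance : AddCommMonoid Bnd where
  add a b := toLex ((ofLex a).1 + (ofLex b).1, (ofLex a).2 && (ofLex b).2)
  zero := toLex (0, true)
  nsmul := nsmulRec
  add_assoc a b c := by
    change toLex (((ofLex a).1 + (ofLex b).1) + (ofLex c).1,
        (((ofLex a).2 && (ofLex b).2) && (ofLex c).2)) =
      toLex ((ofLex a).1 + ((ofLex b).1 + (ofLex c).1),
        ((ofLex a).2 && ((ofLex b).2 && (ofLex c).2)))
    rw [add_assoc, Bool.and_assoc]
  zero_add a := by
    change toLex ((0 : ℤ) + (ofLex a).1, (true && (ofLex a).2)) = a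
    simp
  add_zero a := by
    change toLex ((ofLex a).1 + (0 : ℤ), ((ofLex a).2 && true)) = a
    simp
  add_comm a b := by
    change toLex ((ofLex a).1 + (ofLex b).1, ((ofLex a).2 && (ofLex b).2)) =
      toLex ((ofLex b).1 + (ofLex a).1, ((ofLex b).2 && (ofLex a).2))
    rw [add_comm, Bool.and_comm]

/-- `satB d b` says that `d ≺ k`, where `b = (k, ≺)`. -/
def satB (d : ℝ) (b : Bnd) : Prop :=
  if (ofLex b).2 then d ≤ ((ofLex b).1 : ℝ) else d < ((ofLex b).1 : ℝ)


/-- The inverse of a bound: the inverse of `(k, ≺)` is `(−k, ≺⁻¹)`, where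
`≤⁻¹ = <` and `<⁻¹ = ≤`. -/
def bndInv (b : Bnd) : Bnd := toLex (-(ofLex b).1, !(ofLex b).2)

variable {C : Type*}

/-- Extended valuation on `C0 = C ∪ {0}`: the special clock `0` is `none`. -/
def val0 (v : C → ℝ) : Option C → ℝ := fun x => x.elim 0 v

/-- An abstract domain assigns a finite set of bounds to each ordered pair of
clocks in `C0 = C ∪ {0}`. -/
abbrev AbsDom (C : Type*) := Option C → Option C → Finset Bnd

/-- The symmetry requirement on abstract domains:
`𝒟_{y,x} = {(−k, ≺⁻¹) : (k, ≺) ∈ 𝒟_{x,y}}`. -/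
def DomSym (𝒟 : AbsDom C) : Prop := ∀ x y, 𝒟 y x = (𝒟 x y).image bndInv

variable [LinearOrder (Option C)]

/-- The predicate set `P^𝒟`: one variable `p_{x−y≺k}` for each pair `x ⊏ y`
(in the fixed total order on `C0`) and each bound `(k, ≺) ∈ 𝒟_{x,y}`. -/
abbrev Pred (𝒟 : AbsDom C) :=
  {p : Option C × Option C × Bnd // p.1 < p.2.1 ∧ p.2.2 ∈ 𝒟 p.1 p.2.1}

/-- A minterm: a Boolean valuation of the predicate set. -/
abbrev Minterm (𝒟 : AbsDom C) := Pred 𝒟 → Bool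

/-- The semantics of a minterm: the set of (nonnegative) clock valuations
satisfying exactly the constraints prescribed by the minterm. -/
def mtSem (𝒟 : AbsDom C) (u : Minterm 𝒟) : Set (C → ℝ) :=
  {v | (∀ c, 0 ≤ v c) ∧
    ∀ p : Pred 𝒟, (satB (val0 v p.1.1 - val0 v p.1.2.1) p.1.2.2 ↔ u p = true)}

/-- The semantics of a set of minterms. -/
def setSem (𝒟 : AbsDom C) (S : Set (Minterm 𝒟)) : Set (C → ℝ) :=
  ⋃ u ∈ S, mtSem 𝒟 u

/-- The abstraction function `α_𝒟` maps a set `Z` of valuations to the set of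
minterms whose semantics meets `Z`. -/
def absF (𝒟 : AbsDom C) (Z : Set (C → ℝ)) : Set (Minterm 𝒟) :=
  {u | (mtSem 𝒟 u ∩ Z).Nonempty}

/-- The literal value `u⟦x−y≺k⟧`: the value of the predicate `p_{x−y≺k}` if
`x ⊏ y`, and the negation of the value of `p_{y−x≺⁻¹−k}` if `y ⊏ x`
(if `x = y` the literal is the truth value of the constraint `0 ≺ k`). -/
def litVal (𝒟 : AbsDom C) (u : Minterm 𝒟) (x y : Option C) (b : Bnd) : Bool :=
  if h : x < y ∧ b ∈ 𝒟 x y then u ⟨(x, y, b), h⟩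
  else if h : y < x ∧ bndInv b ∈ 𝒟 y x then !(u ⟨(y, x, bndInv b), h⟩)
  else decide ((0 : Bnd) ≤ b)

/-- A minterm is 2-reduced if no contradiction can be obtained from it via
paths of length at most 2: any constraint implied by a single stronger
asserted constraint, or by the sum of two asserted constraints, is asserted. -/
def TwoReduced (𝒟 : AbsDom C) (u : Minterm 𝒟) : Prop :=
  ∀ x y : Option C, ∀ b ∈ 𝒟 x y,
    ((∃ b' ∈ 𝒟 x y, b' ≤ b ∧ litVal 𝒟 u x y b' = true) ∨
      (∃ z : Option C, ∃ b₁ ∈ 𝒟 x z, ∃ b₂ ∈ 𝒟 z y,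
        b₁ + b₂ ≤ b ∧ litVal 𝒟 u x z b₁ = true ∧ litVal 𝒟 u z y b₂ = true)) →
    litVal 𝒟 u x y b = true

/-- The set of time successors of a set of valuations. -/
def timeSucc {C : Type*} (S : Set (C → ℝ)) : Set (C → ℝ) :=
  {w | ∃ v ∈ S, ∃ d : ℝ, 0 ≤ d ∧ w = fun c => v c + d}

/-- The abstract time-successor relation `S_Up` on minterms: lower bounds on
clocks that fail in `u` fail in `w`, lower bounds that hold are preserved, and
all diagonal constraints between actual clocks are unchanged. -/
def SUp {C : Type*} [LinearOrder (Option C)] (𝒟 : AbsDom C)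
    (u w : Minterm 𝒟) : Prop :=
  (∀ x : C, ∀ b ∈ 𝒟 (some x) none,
      litVal 𝒟 u (some x) none b = false → litVal 𝒟 w (some x) none b = false) ∧
  (∀ y : C, ∀ b ∈ 𝒟 none (some y),
      litVal 𝒟 u none (some y) b = true → litVal 𝒟 w none (some y) b = true) ∧
  (∀ x y : C, ∀ b ∈ 𝒟 (some x) (some y),
      litVal 𝒟 w (some x) (some y) b = litVal 𝒟 u (some x) (some y) b)

lemma satB_of_le {e e' : ℝ} (h : e ≤ e') {b : Bnd} (hb : satB e' b) : satB e b := by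
  unfold satB at *
  split at hb <;> simp_all <;> linarith

lemma satB_bndInv_iff (e : ℝ) (b : Bnd) : satB e (bndInv b) ↔ ¬ satB (-e) b := by
  unfold satB bndInv
  rw [ofLex_toLex]
  cases (ofLex b).2 <;> simp <;> constructor <;> intro h <;> linarith

lemma satB_zero_iff (b : Bnd) : satB 0 b ↔ 0 ≤ b := by
  change satB 0 b ↔ toLex ((0 : ℤ), true) ≤ toLex (ofLex b)
  rw [Prod.Lex.toLex_le_toLex, satB]
  cases (ofLex b).2
  · simp
  · simp [le_iff_lt_or_eq, eq_comm (a := (0 : ℝ)), eq_comm (a := (0 : ℤ))]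

section Literals

variable {C : Type*} [LinearOrder (Option C)] {𝒟 : AbsDom C}

/-- Reversed literals `y ⊏ x` are read through the symmetry of `𝒟`; for `x = y` both sides
say `0 ≤ b`. -/
lemma litVal_eq_true_iff_satB (hsym : DomSym 𝒟) {u : Minterm 𝒟} {v : C → ℝ}
    (hv : v ∈ mtSem 𝒟 u) {x y : Option C} {b : Bnd} (hb : b ∈ 𝒟 x y) :
    litVal 𝒟 u x y b = true ↔ satB (val0 v x - val0 v y) b := by
  rcases lt_trichotomy x y with hxy | rfl | hyx
  · rw [litVal, dif_pos ⟨hxy, hb⟩]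
    exact (hv.2 ⟨(x, y, b), hxy, hb⟩).symm
  · simp [litVal, satB_zero_iff]
  · have hinv : bndInv b ∈ 𝒟 y x := hsym x y ▸ Finset.mem_image_of_mem _ hb
    have hsat := hv.2 ⟨(y, x, bndInv b), hyx, hinv⟩
    rw [satB_bndInv_iff, neg_sub] at hsat
    rw [litVal, dif_neg (fun h => h.1.asymm hyx), dif_pos ⟨hyx, hinv⟩, Bool.not_eq_true',
      ← Bool.not_eq_true, ← hsat, not_not]

/-- A delay increases every clock by the same amount: upper bounds `x − 0 ≺ k` can only become
false, lower bounds `0 − y ≺ k` only true, and differences of clocks do not change. -/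
lemma sUp_of_delay_mem_mtSem (hsym : DomSym 𝒟) {u w : Minterm 𝒟} {v : C → ℝ} {d : ℝ}
    (hd : 0 ≤ d) (hv : v ∈ mtSem 𝒟 u) (hw : (fun c => v c + d) ∈ mtSem 𝒟 w) : SUp 𝒟 u w := by
  refine ⟨fun x b hb => ?_, fun y b hb => ?_, fun x y b hb => ?_⟩
  · simp only [← Bool.not_eq_true, litVal_eq_true_iff_satB hsym hv hb,
      litVal_eq_true_iff_satB hsym hw hb, val0, Option.elim]
    exact mt (satB_of_le (by linarith))
  · simp only [litVal_eq_true_iff_satB hsym hv hb, litVal_eq_true_iff_satB hsym hw hb, val0,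
      Option.elim]
    exact satB_of_le (by linarith)
  · rw [Bool.eq_iff_iff, litVal_eq_true_iff_satB hsym hw hb, litVal_eq_true_iff_satB hsym hv hb]
    simp only [val0, Option.elim, add_sub_add_right_eq_sub]

end Literals

/-- The abstraction of the time successors of `⟦A⟧` is contained in the image
of `A` under the relation `S_Up`. -/
theorem up_abstraction_sound {C : Type*} [LinearOrder (Option C)]
    (𝒟 : AbsDom C) (hsym : DomSym 𝒟) (A : Set (Minterm 𝒟)) :
    absF 𝒟 (timeSucc (setSem 𝒟 A)) ⊆ {w | ∃ u ∈ A, SUp 𝒟 u w} := by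
  rintro w ⟨-, hw, v, hvA, d, hd, rfl⟩
  obtain ⟨u, hu, hv⟩ := Set.mem_iUnion₂.mp hvA
  exact ⟨u, hu, sUp_of_delay_mem_mtSem hsym hd hv hw⟩
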